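/- Let 𝔤 be a complex semisimple Lie algebra whose grading determined by a nonempty subset Σ of the simple roots is of Monge type, with dim 𝔤₋₁ > 2, and let ζ ∈ Σ be the unique simple root (the leader) with 𝔵 = 𝔤_{−ζ}. Then Σ consists precisely of ζ together with all simple roots adjacent to ζ in the Dynkin diagram of 𝔤; that is, Σ = {ζ} ∪ {β ∈ Δ⁰ : β ≠ ζ and (β, ζ) ≠ 0}. -/

import Mathlib

open scoped RealInnerProductSpace BigOperators Classical

/-- A reduced crystallographic root system in a real inner product space,
together with a chosen base of simple roots and the coordinates of each
root with respect to the base. -/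
structure RootSystemBase (V : Type*) [NormedAddCommGroup V] [InnerProductSpace ℝ V] where
  /-- the set of roots -/
  Δ : Finset V
  /-- the set of simple roots (the base) -/
  Δ0 : Finset V
  base_sub : Δ0 ⊆ Δ
  ne_zero : ∀ β ∈ Δ, β ≠ (0 : V)
  indep : LinearIndependent ℝ (fun a : ↥Δ0 => (a : V))
  neg_mem : ∀ β ∈ Δ, -β ∈ Δ
  /-- `coeff β α` is the coefficient `n_α` of the simple root `α` in `β = ∑ n_α • α` -/
  coeff : V → V → ℤ
  coeff_spec : ∀ β ∈ Δ, β = ∑ α ∈ Δ0, (coeff β α : ℝ) • α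
  coeff_sign : ∀ β ∈ Δ, (∀ α ∈ Δ0, 0 ≤ coeff β α) ∨ (∀ α ∈ Δ0, coeff β α ≤ 0)
  crystal : ∀ α ∈ Δ, ∀ β ∈ Δ, ∃ k : ℤ, 2 * ⟪β, α⟫ / ⟪α, α⟫ = (k : ℝ)
  reflect_mem : ∀ α ∈ Δ, ∀ β ∈ Δ, β - (2 * ⟪β, α⟫ / ⟪α, α⟫) • α ∈ Δ
  reduced : ∀ α ∈ Δ, (2 : ℝ) • α ∉ Δ

namespace RootSystemBase

variable {V : Type*} [NormedAddCommGroup V] [InnerProductSpace ℝ V]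

variable (R : RootSystemBase V)

/-- The height `ht_Σ(β)` of a root `β` relative to a subset `Sg` of the simple roots. -/
def ht (Sg : Finset V) (β : V) : ℤ := ∑ α ∈ Sg, R.coeff β α

/-- positive roots -/
def IsPos (β : V) : Prop := β ∈ R.Δ ∧ ∀ α ∈ R.Δ0, 0 ≤ R.coeff β α

/-- negative roots -/
def IsNeg (β : V) : Prop := β ∈ R.Δ ∧ ∀ α ∈ R.Δ0, R.coeff β α ≤ 0

/-- Irreducibility of the root system (the Dynkin diagram is connected); this is
equivalent to the corresponding complex Lie algebra being simple. -/
def Irred : Prop :=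
  ¬ ∃ S : Finset V, S ⊆ R.Δ0 ∧ S.Nonempty ∧ S ≠ R.Δ0 ∧
      ∀ a ∈ S, ∀ b ∈ R.Δ0, b ∉ S → ⟪a, b⟫ = 0

/-- Adjacency of two (simple) roots in the Dynkin diagram. -/
def Adj (a b : V) : Prop := a ≠ b ∧ ⟪a, b⟫ ≠ 0

end RootSystemBase

/-- The root space decomposition data of a complex semisimple Lie algebra `L` with
root system `base`: a Cartan subalgebra `H`, one-dimensional root spaces `rs β`,
and the standard bracket relations among them. -/
structure GradedLieData (V : Type*) [NormedAddCommGroup V] [InnerProductSpace ℝ V]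
    (L : Type*) [LieRing L] [LieAlgebra ℂ L] where
  /-- the underlying root system with base -/
  base : RootSystemBase V
  /-- the Cartan subalgebra -/
  H : Submodule ℂ L
  /-- the root spaces -/
  rs : V → Submodule ℂ L
  rs_dim : ∀ β ∈ base.Δ, Module.finrank ℂ ↥(rs β) = 1
  rs_bot : ∀ v : V, v ∉ base.Δ → rs v = ⊥
  sup_eq_top : H ⊔ (⨆ β ∈ base.Δ, rs β) = ⊤
  h_indep : Disjoint H (⨆ β ∈ base.Δ, rs β)
  rs_indep : ∀ β ∈ base.Δ, Disjoint (rs β) (H ⊔ ⨆ γ ∈ base.Δ.erase β, rs γ)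
  /-- `toH v` is the element of the Cartan subalgebra representing `v` via the Killing
  form -/
  toH : V → L
  toH_mem : ∀ v : V, toH v ∈ H
  toH_add : ∀ u v : V, toH (u + v) = toH u + toH v
  H_span : H = Submodule.span ℂ (toH '' ↑base.Δ0)
  br_toH : ∀ v : V, ∀ β ∈ base.Δ, ∀ x ∈ rs β, ⁅toH v, x⁆ = ((⟪β, v⟫ : ℝ) : ℂ) • x
  br_h_h : ∀ h ∈ H, ∀ h' ∈ H, ⁅h, h'⁆ = (0 : L)
  br_h_rs : ∀ β ∈ base.Δ, ∀ h ∈ H, ∀ x ∈ rs β, ⁅h, x⁆ ∈ rs β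
  br_rs_mem : ∀ β ∈ base.Δ, ∀ γ ∈ base.Δ, β + γ ∈ base.Δ →
      ∀ x ∈ rs β, ∀ y ∈ rs γ, ⁅x, y⁆ ∈ rs (β + γ)
  br_rs_zero : ∀ β ∈ base.Δ, ∀ γ ∈ base.Δ, β + γ ∉ base.Δ → β + γ ≠ 0 →
      ∀ x ∈ rs β, ∀ y ∈ rs γ, ⁅x, y⁆ = (0 : L)
  br_rs_opp : ∀ β ∈ base.Δ, ∀ x ∈ rs β, ∀ y ∈ rs (-β),
      ⁅x, y⁆ ∈ Submodule.span ℂ ({toH β} : Set L)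
  br_nondeg : ∀ β ∈ base.Δ, ∀ γ ∈ base.Δ, β + γ ∈ base.Δ →
      ∀ x ∈ rs β, ∀ y ∈ rs γ, ⁅x, y⁆ = (0 : L) → x = 0 ∨ y = 0

namespace GradedLieData

variable {V : Type*} [NormedAddCommGroup V] [InnerProductSpace ℝ V]
variable {L : Type*} [LieRing L] [LieAlgebra ℂ L]

variable (G : GradedLieData V L)

/-- The grading component `𝔤ⱼ` of the grading of `L` determined by the subset `Sg`
of the simple roots. -/
def g (Sg : Finset V) (j : ℤ) : Submodule ℂ L :=
  if j = 0 then G.H ⊔ ⨆ β ∈ G.base.Δ.filter (fun β => G.base.ht Sg β = 0), G.rs β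
  else ⨆ β ∈ G.base.Δ.filter (fun β => G.base.ht Sg β = j), G.rs β

/-- The grading of `L` determined by `Sg` is of *Monge type*: the component `𝔤₋₁`
contains a nonzero abelian subalgebra `Y` of codimension one with
`dim 𝔤₋₂ = dim Y`. -/
def Monge (Sg : Finset V) : Prop :=
  ∃ Y : Submodule ℂ L, Y ≤ G.g Sg (-1) ∧ Y ≠ ⊥ ∧
    (∀ a ∈ Y, ∀ b ∈ Y, ⁅a, b⁆ = (0 : L)) ∧
    Module.finrank ℂ ↥Y + 1 = Module.finrank ℂ ↥(G.g Sg (-1)) ∧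
    Module.finrank ℂ ↥(G.g Sg (-2)) = Module.finrank ℂ ↥Y

end GradedLieData

/-!
Fix a nonzero `x₀ ∈ 𝔤_{-ζ}`. Every root of `Σ`-height 2 is a sum of two roots of `Σ`-height 1,
so `𝔤₋₂ = [𝔤₋₁, 𝔤₋₁]`; writing `𝔤₋₁ = 𝔤_{-ζ} + 𝔶` with `𝔶` abelian this is `[x₀, 𝔶]`, and
`dim 𝔤₋₂ = dim 𝔶` makes `ad x₀` injective on `𝔶`. Hence `ζ + μ` is a root for every other root `μ`
of `Σ`-height 1, while for two such roots `γ, δ ≠ ζ` the bracket `[z_{-γ}, z_{-δ}]` lies in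
`[x₀, 𝔤₋₁] ⊆ 𝔤_{-ζ-γ} + 𝔤_{-ζ-δ}`, so it vanishes and `γ + δ` is not a root.

The first fact makes every `β ∈ Σ ∖ {ζ}` adjacent to `ζ`, since orthogonal simple roots never
sum to a root. Conversely, if `β ∉ Σ` is adjacent to `ζ`, then `ζ + β` is a root of `Σ`-height 1,
and a third root `δ` of `Σ`-height 1 (it exists as `dim 𝔤₋₁ > 2`) gives a contradiction: according
to the sign of `(β, δ)`, either `(ζ + β) + δ = β + (ζ + δ)` or `(δ - β) + (ζ + β) = ζ + δ` is a
root.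
-/

namespace RootSystemBase

variable {V : Type*} [NormedAddCommGroup V] [InnerProductSpace ℝ V] (R : RootSystemBase V)

lemma coeff_eq_of_eq_sum {β : V} (hβ : β ∈ R.Δ) {c : V → ℝ} (h : β = ∑ α ∈ R.Δ0, c α • α)
    {α : V} (hα : α ∈ R.Δ0) : (R.coeff β α : ℝ) = c α := by
  have hz : ∑ a : R.Δ0, (c a - R.coeff β a) • (a : V) = 0 := by
    rw [Finset.sum_coe_sort R.Δ0 fun a => (c a - R.coeff β a) • a]
    simp only [sub_smul, Finset.sum_sub_distrib, ← h, ← R.coeff_spec β hβ, sub_self]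
  linarith [Fintype.linearIndependent_iff.mp R.indep _ hz ⟨α, hα⟩]

lemma coeff_simple {α α' : V} (hα : α ∈ R.Δ0) (hα' : α' ∈ R.Δ0) :
    R.coeff α α' = if α' = α then 1 else 0 := by
  have := R.coeff_eq_of_eq_sum (R.base_sub hα) (c := fun x => if x = α then 1 else 0)
    (by simp [ite_smul, Finset.sum_ite_eq', hα]) hα'
  split_ifs at this ⊢ <;> exact_mod_cast this

lemma coeff_add {β γ α : V} (hβ : β ∈ R.Δ) (hγ : γ ∈ R.Δ) (hs : β + γ ∈ R.Δ) (hα : α ∈ R.Δ0) :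
    R.coeff (β + γ) α = R.coeff β α + R.coeff γ α := by
  have := R.coeff_eq_of_eq_sum hs (c := fun x => (R.coeff β x : ℝ) + R.coeff γ x)
    (by simp only [add_smul, Finset.sum_add_distrib, ← R.coeff_spec β hβ, ← R.coeff_spec γ hγ])
    hα
  exact_mod_cast this

lemma coeff_neg {β α : V} (hβ : β ∈ R.Δ) (hα : α ∈ R.Δ0) : R.coeff (-β) α = -R.coeff β α := by
  have := R.coeff_eq_of_eq_sum (R.neg_mem β hβ) (c := fun x => -(R.coeff β x : ℝ))
    (by simp only [neg_smul, Finset.sum_neg_distrib, ← R.coeff_spec β hβ]) hα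
  exact_mod_cast this

variable {Sg : Finset V}

lemma ht_add (hS : Sg ⊆ R.Δ0) {β γ : V} (hβ : β ∈ R.Δ) (hγ : γ ∈ R.Δ) (hs : β + γ ∈ R.Δ) :
    R.ht Sg (β + γ) = R.ht Sg β + R.ht Sg γ := by
  simp only [ht, ← Finset.sum_add_distrib]
  exact Finset.sum_congr rfl fun α hα => R.coeff_add hβ hγ hs (hS hα)

lemma ht_sub (hS : Sg ⊆ R.Δ0) {β γ : V} (hβ : β ∈ R.Δ) (hγ : γ ∈ R.Δ) (hs : β - γ ∈ R.Δ) :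
    R.ht Sg (β - γ) = R.ht Sg β - R.ht Sg γ := by
  have := R.ht_add hS hs hγ (by rwa [sub_add_cancel])
  rw [sub_add_cancel] at this
  omega

lemma ht_neg (hS : Sg ⊆ R.Δ0) {β : V} (hβ : β ∈ R.Δ) : R.ht Sg (-β) = -R.ht Sg β := by
  simp only [ht, ← Finset.sum_neg_distrib]
  exact Finset.sum_congr rfl fun α hα => R.coeff_neg hβ (hS hα)

lemma ht_simple (hS : Sg ⊆ R.Δ0) {α : V} (hα : α ∈ R.Δ0) :
    R.ht Sg α = if α ∈ Sg then 1 else 0 := by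
  rw [ht, Finset.sum_congr rfl fun α' hα' => R.coeff_simple hα (hS hα'), Finset.sum_ite_eq']

lemma ht_eq_one_of_mem (hS : Sg ⊆ R.Δ0) {α : V} (hα : α ∈ Sg) : R.ht Sg α = 1 := by
  simp [R.ht_simple hS (hS hα), hα]

lemma ht_eq_zero_of_notMem (hS : Sg ⊆ R.Δ0) {α : V} (hα : α ∈ R.Δ0) (hαS : α ∉ Sg) :
    R.ht Sg α = 0 := by
  simp [R.ht_simple hS hα, hαS]

lemma coeff_nonneg_of_ht_pos (hS : Sg ⊆ R.Δ0) {β : V} (hβ : β ∈ R.Δ) (h : 0 < R.ht Sg β)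
    {α : V} (hα : α ∈ R.Δ0) : 0 ≤ R.coeff β α := by
  refine (R.coeff_sign β hβ).elim (fun hpos => hpos α hα) fun hneg => ?_
  have : R.ht Sg β ≤ 0 := Finset.sum_nonpos fun α' hα' => hneg α' (hS hα')
  omega

lemma ne_neg_of_ht_pos (hS : Sg ⊆ R.Δ0) {α β : V} (hα : α ∈ R.Δ) (hα0 : 0 < R.ht Sg α)
    (hβ0 : 0 < R.ht Sg β) : β ≠ -α := by
  rintro rfl
  rw [R.ht_neg hS hα] at hβ0
  omega

lemma neg_add_neg_ne_zero (hS : Sg ⊆ R.Δ0) {α β : V} (hβ : β ∈ R.Δ) (hα0 : 0 < R.ht Sg α)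
    (hβ0 : 0 < R.ht Sg β) : -α + -β ≠ 0 :=
  neg_add_eq_zero.not.mpr (R.ne_neg_of_ht_pos hS hβ hβ0 hα0)

lemma eq_one_or_eq_neg_one_of_eq_smul {μ β : V} (hμ : μ ∈ R.Δ) (hβ : β ∈ R.Δ) {c : ℝ}
    (h : μ = c • β) : c = 1 ∨ c = -1 := by
  have hc0 : c ≠ 0 := by rintro rfl; exact R.ne_zero μ hμ (by simpa using h)
  have hββ : 0 < ⟪β, β⟫ := real_inner_self_pos.mpr (R.ne_zero β hβ)
  obtain ⟨k, hk⟩ := R.crystal β hβ μ hμ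
  obtain ⟨l, hl⟩ := R.crystal μ hμ β hβ
  rw [h, real_inner_smul_left] at hk
  rw [h, real_inner_smul_left, real_inner_smul_right] at hl
  have hk' : (k : ℝ) = 2 * c := by rw [← hk]; field_simp
  have hl' : (l : ℝ) * c = 2 := by rw [← hl]; field_simp
  have hkl : k * l = 4 := by
    have : (k : ℝ) * l = 4 := by linear_combination (l : ℝ) * hk' + 2 * hl'
    exact_mod_cast this
  have hred : ∀ α ∈ R.Δ, ∀ s : ℝ, s = 2 ∨ s = -2 → s • α ∉ R.Δ := by
    rintro α hα s (rfl | rfl)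
    · exact R.reduced α hα
    · rw [show (-2 : ℝ) • α = (2 : ℝ) • -α by module]
      exact R.reduced _ (R.neg_mem α hα)
  have hβμ : β = c⁻¹ • μ := by rw [h, smul_smul, inv_mul_cancel₀ hc0, one_smul]
  have hk4 : k ≤ 4 := Int.le_of_dvd (by norm_num) ⟨l, hkl.symm⟩
  have hk4' : -4 ≤ k := by
    have : -k ≤ 4 := Int.le_of_dvd (by norm_num) ⟨-l, by rw [← hkl]; ring⟩
    omega
  obtain rfl | rfl | rfl | rfl | rfl | rfl : k = 1 ∨ k = -1 ∨ k = 2 ∨ k = -2 ∨ k = 4 ∨ k = -4 := by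
    interval_cases k <;> omega
  · exact absurd (hβμ ▸ hβ) (hred μ hμ _ (Or.inl (by push_cast at hk'; field_simp; linarith)))
  · exact absurd (hβμ ▸ hβ) (hred μ hμ _ (Or.inr (by push_cast at hk'; field_simp; linarith)))
  · left; push_cast at hk'; linarith
  · right; push_cast at hk'; linarith
  · exact absurd (h ▸ hμ) (hred β hβ _ (Or.inl (by push_cast at hk'; linarith)))
  · exact absurd (h ▸ hμ) (hred β hβ _ (Or.inr (by push_cast at hk'; linarith)))

/-- Strict Cauchy–Schwarz: two roots are proportional only if they are equal or opposite. -/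
lemma inner_mul_inner_lt {μ ν : V} (hμ : μ ∈ R.Δ) (hν : ν ∈ R.Δ) (h₁ : μ ≠ ν) (h₂ : μ ≠ -ν) :
    ⟪μ, ν⟫ * ⟪μ, ν⟫ < ⟪μ, μ⟫ * ⟪ν, ν⟫ := by
  refine (real_inner_mul_inner_self_le μ ν).lt_of_ne fun heq => ?_
  have habs : ‖⟪ν, μ⟫‖ = ‖ν‖ * ‖μ‖ := by
    rw [Real.norm_eq_abs, ← mul_self_inj (abs_nonneg _) (by positivity), abs_mul_abs_self,
      real_inner_comm, heq, real_inner_self_eq_norm_mul_norm, real_inner_self_eq_norm_mul_norm]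
    ring
  obtain ⟨r, -, hr⟩ := (norm_inner_eq_norm_iff (𝕜 := ℝ) (R.ne_zero ν hν) (R.ne_zero μ hμ)).mp habs
  rcases R.eq_one_or_eq_neg_one_of_eq_smul hμ hν hr with rfl | rfl
  · exact h₁ (by simpa using hr)
  · exact h₂ (by simpa using hr)

lemma add_mem_of_inner_neg {μ ν : V} (hμ : μ ∈ R.Δ) (hν : ν ∈ R.Δ) (hneg : ⟪μ, ν⟫ < 0)
    (hne : μ ≠ -ν) : μ + ν ∈ R.Δ := by
  have hμν : μ ≠ ν := by rintro rfl; exact real_inner_self_nonneg.not_gt hneg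
  have hμμ : 0 < ⟪μ, μ⟫ := real_inner_self_pos.mpr (R.ne_zero μ hμ)
  have hνν : 0 < ⟪ν, ν⟫ := real_inner_self_pos.mpr (R.ne_zero ν hν)
  obtain ⟨k, hk⟩ := R.crystal ν hν μ hμ
  obtain ⟨l, hl⟩ := R.crystal μ hμ ν hν
  have hk0 : k < 0 := by
    have : (k : ℝ) < 0 := hk ▸ div_neg_of_neg_of_pos (by linarith) hνν
    exact_mod_cast this
  have hl0 : l < 0 := by
    have : (l : ℝ) < 0 := hl ▸ div_neg_of_neg_of_pos (by rw [real_inner_comm]; linarith) hμμ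
    exact_mod_cast this
  have hkl : k * l < 4 := by
    have : (k : ℝ) * l < 4 := by
      rw [← hk, ← hl, real_inner_comm μ ν, div_mul_div_comm, div_lt_iff₀ (by positivity)]
      nlinarith [R.inner_mul_inner_lt hμ hν hμν hne]
    exact_mod_cast this
  obtain hk1 | hl1 : k = -1 ∨ l = -1 := by
    by_contra! h
    nlinarith [show k ≤ -2 by omega, show l ≤ -2 by omega]
  · have := R.reflect_mem ν hν μ hμ
    rwa [hk, hk1, Int.cast_neg, Int.cast_one, neg_one_smul, sub_neg_eq_add] at this
  · have := R.reflect_mem μ hμ ν hν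
    rwa [hl, hl1, Int.cast_neg, Int.cast_one, neg_one_smul, sub_neg_eq_add, add_comm] at this

lemma sub_mem_of_inner_pos {μ ν : V} (hμ : μ ∈ R.Δ) (hν : ν ∈ R.Δ) (hpos : 0 < ⟪μ, ν⟫)
    (hne : μ ≠ ν) : μ - ν ∈ R.Δ := by
  rw [sub_eq_add_neg]
  exact R.add_mem_of_inner_neg hμ (R.neg_mem ν hν) (by rw [inner_neg_right]; linarith)
    (by rwa [neg_neg])

lemma sub_notMem_of_simple {α β : V} (hα : α ∈ R.Δ0) (hβ : β ∈ R.Δ0) (hne : α ≠ β) :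
    α - β ∉ R.Δ := by
  intro hmem
  have hc : ∀ x ∈ R.Δ0, R.coeff α x = R.coeff (α - β) x + R.coeff β x := fun x hx => by
    simpa using R.coeff_add hmem (R.base_sub hβ) (by simpa using R.base_sub hα) hx
  have hcα := hc α hα
  have hcβ := hc β hβ
  simp only [R.coeff_simple hα hα, R.coeff_simple hβ hα, R.coeff_simple hα hβ,
    R.coeff_simple hβ hβ, hne, hne.symm, if_true, if_false] at hcα hcβ
  rcases R.coeff_sign _ hmem with h | h
  · linarith [h β hβ]
  · linarith [h α hα]

lemma inner_nonpos_of_simple {α β : V} (hα : α ∈ R.Δ0) (hβ : β ∈ R.Δ0) (hne : α ≠ β) :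
    ⟪α, β⟫ ≤ 0 :=
  not_lt.mp fun hpos => R.sub_notMem_of_simple hα hβ hne
    (R.sub_mem_of_inner_pos (R.base_sub hα) (R.base_sub hβ) hpos hne)

lemma add_mem_iff_inner_ne_zero {α β : V} (hα : α ∈ R.Δ0) (hβ : β ∈ R.Δ0) (hne : α ≠ β) :
    α + β ∈ R.Δ ↔ ⟪α, β⟫ ≠ 0 := by
  have hpos : ∀ γ ∈ R.Δ0, 0 < R.ht R.Δ0 γ := fun γ hγ => by
    rw [R.ht_eq_one_of_mem subset_rfl hγ]; exact one_pos
  refine ⟨fun hmem horth => ?_, fun hadj =>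
    R.add_mem_of_inner_neg (R.base_sub hα) (R.base_sub hβ)
      ((R.inner_nonpos_of_simple hα hβ hne).lt_of_ne hadj)
      (R.ne_neg_of_ht_pos subset_rfl (R.base_sub hβ) (hpos β hβ) (hpos α hα))⟩
  have hββ : 0 < ⟪β, β⟫ := real_inner_self_pos.mpr (R.ne_zero β (R.base_sub hβ))
  have hrefl := R.reflect_mem β (R.base_sub hβ) (α + β) hmem
  have h2 : 2 * ⟪α + β, β⟫ / ⟪β, β⟫ = 2 := by
    rw [inner_add_left, horth, zero_add]; field_simp
  rw [h2, show α + β - (2 : ℝ) • β = α - β by module] at hrefl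
  exact R.sub_notMem_of_simple hα hβ hne hrefl

lemma exists_simple_inner_pos {μ : V} (hμ : μ ∈ R.Δ) (hpos : ∀ α ∈ R.Δ0, 0 ≤ R.coeff μ α) :
    ∃ α ∈ R.Δ0, 0 < ⟪μ, α⟫ := by
  by_contra! h
  have : ⟪μ, μ⟫ ≤ 0 := by
    nth_rewrite 2 [R.coeff_spec μ hμ]
    rw [inner_sum]
    refine Finset.sum_nonpos fun α hα => ?_
    rw [real_inner_smul_right]
    exact mul_nonpos_of_nonneg_of_nonpos (by exact_mod_cast hpos α hα) (h α hα)
  exact this.not_gt (real_inner_self_pos.mpr (R.ne_zero μ hμ))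

lemma add_mem_or_add_mem_of_add_eq_sub {μ α γ δ : V} (hμ : μ ∈ R.Δ) (hα : α ∈ R.Δ)
    (hγ : γ ∈ R.Δ) (hδ : δ ∈ R.Δ) (hsum : γ + δ = μ - α) (hμγ : ⟪μ, γ⟫ ≤ 0) (hμδ : ⟪μ, δ⟫ ≤ 0)
    (hμα : μ ≠ α) (hμα' : μ ≠ -α) (hαγ : α ≠ -γ) (hαδ : α ≠ -δ) :
    α + γ ∈ R.Δ ∨ α + δ ∈ R.Δ := by
  have hμμ : 0 < ⟪μ, μ⟫ := real_inner_self_pos.mpr (R.ne_zero μ hμ)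
  have hαα : 0 < ⟪α, α⟫ := real_inner_self_pos.mpr (R.ne_zero α hα)
  have hle : ⟪μ, μ⟫ ≤ ⟪μ, α⟫ := by
    have : ⟪μ, γ⟫ + ⟪μ, δ⟫ = ⟪μ, μ⟫ - ⟪μ, α⟫ := by rw [← inner_add_right, hsum, inner_sub_right]
    linarith
  have hlt : ⟪μ, α⟫ < ⟪α, α⟫ := by
    nlinarith [R.inner_mul_inner_lt hμ hα hμα hμα']
  have hneg : ⟪α, γ⟫ + ⟪α, δ⟫ < 0 := by
    rw [← inner_add_right, hsum, inner_sub_right, real_inner_comm μ α]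
    linarith
  by_cases hαγ' : ⟪α, γ⟫ < 0
  · exact Or.inl (R.add_mem_of_inner_neg hα hγ hαγ' hαγ)
  · exact Or.inr (R.add_mem_of_inner_neg hα hδ (by linarith) hαδ)

/-- Induction on the full height: either `μ` pairs positively with a root `γ` of `Σ`-height 1 and
`μ = γ + (μ - γ)`, or it pairs positively with a simple root `α ∉ Σ`, and `α` can be attached to
one of the two summands of `μ - α`. -/
lemma exists_add_eq_of_ht_eq_two (hS : Sg ⊆ R.Δ0) {μ : V} (hμ : μ ∈ R.Δ) (h2 : R.ht Sg μ = 2) :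
    ∃ γ ∈ R.Δ, ∃ δ ∈ R.Δ, R.ht Sg γ = 1 ∧ R.ht Sg δ = 1 ∧ γ + δ = μ := by
  induction hn : (R.ht R.Δ0 μ).toNat using Nat.strong_induction_on generalizing μ with
  | _ n ih =>
  by_cases hsplit : ∃ γ ∈ R.Δ, R.ht Sg γ = 1 ∧ 0 < ⟪μ, γ⟫
  · obtain ⟨γ, hγ, hγ1, hμγ⟩ := hsplit
    have hd := R.sub_mem_of_inner_pos hμ hγ hμγ (ne_of_apply_ne (R.ht Sg) (by omega))
    exact ⟨γ, hγ, μ - γ, hd, hγ1, by rw [R.ht_sub hS hμ hγ hd]; omega, add_sub_cancel γ μ⟩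
  push Not at hsplit
  obtain ⟨α, hα0, hμα⟩ :=
    R.exists_simple_inner_pos hμ fun α hα => R.coeff_nonneg_of_ht_pos hS hμ (by omega) hα
  have hα := R.base_sub hα0
  have hαS : α ∉ Sg := fun hαS => (hsplit α hα (R.ht_eq_one_of_mem hS hαS)).not_gt hμα
  have hα0' : R.ht Sg α = 0 := R.ht_eq_zero_of_notMem hS hα0 hαS
  have hμα' : μ - α ∈ R.Δ := R.sub_mem_of_inner_pos hμ hα hμα (ne_of_apply_ne (R.ht Sg) (by omega))
  have h2' : R.ht Sg (μ - α) = 2 := by rw [R.ht_sub hS hμ hα hμα']; omega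
  have htot : R.ht R.Δ0 (μ - α) = R.ht R.Δ0 μ - 1 := by
    rw [R.ht_sub subset_rfl hμ hα hμα', R.ht_eq_one_of_mem subset_rfl hα0]
  have hnn : 0 ≤ R.ht R.Δ0 (μ - α) :=
    Finset.sum_nonneg fun _ hα' => R.coeff_nonneg_of_ht_pos hS hμα' (by omega) hα'
  obtain ⟨γ, hγ, δ, hδ, hγ1, hδ1, hsum⟩ := ih _ (by omega) hμα' h2' rfl
  have hne : ∀ β ∈ R.Δ, R.ht Sg β = 1 → α ≠ -β := fun β hβ hβ1 =>
    ne_of_apply_ne (R.ht Sg) (by rw [R.ht_neg hS hβ]; omega)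
  rcases R.add_mem_or_add_mem_of_add_eq_sub hμ hα hγ hδ hsum (hsplit γ hγ hγ1) (hsplit δ hδ hδ1)
      (ne_of_apply_ne (R.ht Sg) (by omega))
      (ne_of_apply_ne (R.ht Sg) (by rw [R.ht_neg hS hα]; omega))
      (hne γ hγ hγ1) (hne δ hδ hδ1) with hαγ | hαδ
  · refine ⟨α + γ, hαγ, δ, hδ, by rw [R.ht_add hS hα hγ hαγ]; omega, hδ1, ?_⟩
    rw [add_assoc, hsum, add_sub_cancel]
  · refine ⟨γ, hγ, α + δ, hαδ, hγ1, by rw [R.ht_add hS hα hδ hαδ]; omega, ?_⟩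
    rw [add_left_comm, hsum, add_sub_cancel]

end RootSystemBase

theorem lie_eq_smul_lie_sub_smul_lie {R L : Type*} [CommRing R] [LieRing L] [LieAlgebra R L]
    {x u v : L} (a b : R) (h : ⁅u - a • x, v - b • x⁆ = 0) :
    ⁅u, v⁆ = a • ⁅x, v⁆ - b • ⁅x, u⁆ := by
  rw [← sub_eq_zero, ← h]
  simp only [sub_lie, lie_sub, smul_lie, lie_smul, lie_self, ← lie_skew x u]
  module

namespace GradedLieData

variable {V : Type*} [NormedAddCommGroup V] [InnerProductSpace ℝ V]
variable {L : Type*} [LieRing L] [LieAlgebra ℂ L] (G : GradedLieData V L)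

def rsCompl (a : V) : Submodule ℂ L := G.H ⊔ ⨆ γ ∈ G.base.Δ.erase a, G.rs γ

lemma rs_le_rsCompl {a b : V} (hab : b ≠ a) : G.rs b ≤ G.rsCompl a := by
  by_cases hb : b ∈ G.base.Δ
  · exact le_sup_of_le_right (le_iSup₂_of_le b (Finset.mem_erase.mpr ⟨hab, hb⟩) le_rfl)
  · rw [G.rs_bot b hb]
    exact bot_le

lemma eq_zero_of_mem_rs_of_mem_rsCompl {a : V} (ha : a ∈ G.base.Δ) {u : L} (hu : u ∈ G.rs a)
    (hu' : u ∈ G.rsCompl a) : u = 0 :=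
  Submodule.disjoint_def.mp (G.rs_indep a ha) u hu hu'

lemma lie_mem_rsCompl {a b c : V} (ha : a ∈ G.base.Δ) (hb : b ∈ G.base.Δ) (hab : a + b ≠ 0)
    (habc : a + b ≠ c) {u v : L} (hu : u ∈ G.rs a) (hv : v ∈ G.rs b) : ⁅u, v⁆ ∈ G.rsCompl c := by
  by_cases hmem : a + b ∈ G.base.Δ
  · exact G.rs_le_rsCompl habc (G.br_rs_mem a ha b hb hmem u hu v hv)
  · rw [G.br_rs_zero a ha b hb hmem hab u hu v hv]
    exact Submodule.zero_mem _

lemma exists_ne_zero_mem_rs {a : V} (ha : a ∈ G.base.Δ) : ∃ z ∈ G.rs a, z ≠ 0 :=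
  Submodule.exists_mem_ne_zero_of_ne_bot fun h => by
    have := G.rs_dim a ha
    rw [h, finrank_bot] at this
    exact zero_ne_one this

lemma exists_smul_eq_of_mem_rs {a : V} (ha : a ∈ G.base.Δ) {z w : L} (hz : z ∈ G.rs a)
    (hz0 : z ≠ 0) (hw : w ∈ G.rs a) : ∃ c : ℂ, c • z = w := by
  obtain ⟨c, hc⟩ := (finrank_eq_one_iff_of_nonzero' (⟨z, hz⟩ : G.rs a) (by simpa using hz0)).mp
    (G.rs_dim a ha) ⟨w, hw⟩
  exact ⟨c, congrArg Subtype.val hc⟩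

lemma finrank_rs_le_one (a : V) : Module.finrank ℂ (G.rs a) ≤ 1 := by
  by_cases ha : a ∈ G.base.Δ
  · exact (G.rs_dim a ha).le
  · rw [G.rs_bot a ha, finrank_bot]
    exact zero_le_one

lemma g_eq_iSup (Sg : Finset V) {j : ℤ} (hj : j ≠ 0) :
    G.g Sg j = ⨆ β ∈ G.base.Δ.filter (fun β => G.base.ht Sg β = j), G.rs β :=
  if_neg hj

lemma g_le_iff {Sg : Finset V} {j : ℤ} (hj : j ≠ 0) {p : Submodule ℂ L} :
    G.g Sg j ≤ p ↔ ∀ β ∈ G.base.Δ, G.base.ht Sg β = j → G.rs β ≤ p := by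
  simp [G.g_eq_iSup Sg hj, Finset.mem_filter, and_imp]

lemma rs_le_g {Sg : Finset V} {μ : V} (hμ : μ ∈ G.base.Δ) {j : ℤ} (hj : j ≠ 0)
    (h : G.base.ht Sg μ = j) : G.rs μ ≤ G.g Sg j :=
  (G.g_le_iff hj).mp le_rfl μ hμ h

lemma rs_neg_le_g_neg_one {Sg : Finset V} (hS : Sg ⊆ G.base.Δ0) {μ : V} (hμ : μ ∈ G.base.Δ)
    (h : G.base.ht Sg μ = 1) : G.rs (-μ) ≤ G.g Sg (-1) :=
  G.rs_le_g (G.base.neg_mem μ hμ) (by norm_num) (by rw [G.base.ht_neg hS hμ, h])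

lemma lie_mem_g_add {Sg : Finset V} (hS : Sg ⊆ G.base.Δ0) {i j : ℤ} (hi : i ≠ 0) (hj : j ≠ 0)
    (hij : i + j ≠ 0) {u v : L} (hu : u ∈ G.g Sg i) (hv : v ∈ G.g Sg j) :
    ⁅u, v⁆ ∈ G.g Sg (i + j) := by
  have hroot : ∀ a ∈ G.base.Δ, G.base.ht Sg a = i → ∀ x ∈ G.rs a,
      ∀ b ∈ G.base.Δ, G.base.ht Sg b = j → ∀ y ∈ G.rs b, ⁅x, y⁆ ∈ G.g Sg (i + j) := by
    intro a ha hai x hx b hb hbj y hy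
    have hab : a + b ≠ 0 := fun h0 => by
      rw [← neg_eq_iff_add_eq_zero.mpr h0, G.base.ht_neg hS ha] at hbj
      omega
    by_cases hmem : a + b ∈ G.base.Δ
    · exact G.rs_le_g hmem hij (by rw [G.base.ht_add hS ha hb hmem, hai, hbj])
        (G.br_rs_mem a ha b hb hmem x hx y hy)
    · rw [G.br_rs_zero a ha b hb hmem hab x hx y hy]
      exact Submodule.zero_mem _
  -- bilinearity: reduce to root vectors first in the second argument, then in the first
  have hleft : ∀ a ∈ G.base.Δ, G.base.ht Sg a = i → ∀ x ∈ G.rs a, ⁅x, v⁆ ∈ G.g Sg (i + j) :=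
    fun a ha hai x hx => (G.g_le_iff hj (p := (G.g Sg (i + j)).comap (LieAlgebra.ad ℂ L x))).mpr
      (fun b hb hbj y hy => hroot a ha hai x hx b hb hbj y hy) hv
  have hflip : G.g Sg i ≤
      (G.g Sg (i + j)).comap ((LieAlgebra.ad ℂ L : L →ₗ[ℂ] Module.End ℂ L).flip v) :=
    (G.g_le_iff hi).mpr fun a ha hai x hx => hleft a ha hai x hx
  exact hflip hu

lemma exists_ht_eq_one_ne_ne [FiniteDimensional ℂ L] {Sg : Finset V} (hS : Sg ⊆ G.base.Δ0)
    (hdim : 2 < Module.finrank ℂ (G.g Sg (-1))) (a b : V) :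
    ∃ δ ∈ G.base.Δ, G.base.ht Sg δ = 1 ∧ δ ≠ a ∧ δ ≠ b := by
  by_contra! hab
  have hle : G.g Sg (-1) ≤ G.rs (-a) ⊔ G.rs (-b) := by
    refine (G.g_le_iff (by norm_num)).mpr fun μ hμ hμ1 => ?_
    have hμ1' : G.base.ht Sg (-μ) = 1 := by rw [G.base.ht_neg hS hμ, hμ1]; rfl
    rcases eq_or_ne (-μ) a with h | h
    · rw [← h, neg_neg]
      exact le_sup_left
    · rw [← hab (-μ) (G.base.neg_mem μ hμ) hμ1' h, neg_neg]
      exact le_sup_right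
  have := (Submodule.finrank_mono hle).trans (Submodule.finrank_add_le_finrank_add_finrank _ _)
  linarith [G.finrank_rs_le_one (-a), G.finrank_rs_le_one (-b)]

end GradedLieData

namespace GradedLieData

variable {V : Type*} [NormedAddCommGroup V] [InnerProductSpace ℝ V]
variable {L : Type*} [LieRing L] [LieAlgebra ℂ L]

structure IsLeader (G : GradedLieData V L) (Sg : Finset V) (Y : Submodule ℂ L) (ζ : V) : Prop where
  subset_base : Sg ⊆ G.base.Δ0
  mem : ζ ∈ Sg
  le_g : Y ≤ G.g Sg (-1)
  lie_eq_zero : ∀ a ∈ Y, ∀ b ∈ Y, ⁅a, b⁆ = (0 : L)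
  finrank_g_neg_two : Module.finrank ℂ (G.g Sg (-2)) = Module.finrank ℂ Y
  rs_sup : G.rs (-ζ) ⊔ Y = G.g Sg (-1)

namespace IsLeader

variable {G : GradedLieData V L} {Sg : Finset V} {Y : Submodule ℂ L} {ζ : V} {x₀ : L}

lemma mem_roots (h : G.IsLeader Sg Y ζ) : ζ ∈ G.base.Δ :=
  G.base.base_sub (h.subset_base h.mem)

lemma ht_eq_one (h : G.IsLeader Sg Y ζ) : G.base.ht Sg ζ = 1 :=
  G.base.ht_eq_one_of_mem h.subset_base h.mem

lemma exists_sub_smul_mem (h : G.IsLeader Sg Y ζ) (hx₀ : x₀ ∈ G.rs (-ζ)) (hx₀0 : x₀ ≠ 0)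
    {w : L} (hw : w ∈ G.g Sg (-1)) : ∃ c : ℂ, w - c • x₀ ∈ Y := by
  rw [← h.rs_sup] at hw
  obtain ⟨u, hu, y, hy, rfl⟩ := Submodule.mem_sup.mp hw
  obtain ⟨c, rfl⟩ := G.exists_smul_eq_of_mem_rs (G.base.neg_mem ζ h.mem_roots) hx₀ hx₀0 hu
  exact ⟨c, by rwa [add_sub_cancel_left]⟩

lemma exists_lie_eq (h : G.IsLeader Sg Y ζ) (hx₀ : x₀ ∈ G.rs (-ζ)) (hx₀0 : x₀ ≠ 0) {u v : L}
    (hu : u ∈ G.g Sg (-1)) (hv : v ∈ G.g Sg (-1)) :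
    ∃ a b : ℂ, ⁅u, v⁆ = a • ⁅x₀, v⁆ - b • ⁅x₀, u⁆ := by
  obtain ⟨a, ha⟩ := h.exists_sub_smul_mem hx₀ hx₀0 hu
  obtain ⟨b, hb⟩ := h.exists_sub_smul_mem hx₀ hx₀0 hv
  exact ⟨a, b, lie_eq_smul_lie_sub_smul_lie a b (h.lie_eq_zero _ ha _ hb)⟩

lemma lie_mem_map_ad (h : G.IsLeader Sg Y ζ) (hx₀ : x₀ ∈ G.rs (-ζ)) (hx₀0 : x₀ ≠ 0) {w : L}
    (hw : w ∈ G.g Sg (-1)) : ⁅x₀, w⁆ ∈ Y.map (LieAlgebra.ad ℂ L x₀) := by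
  obtain ⟨c, hc⟩ := h.exists_sub_smul_mem hx₀ hx₀0 hw
  refine ⟨w - c • x₀, hc, ?_⟩
  simp [lie_sub, lie_smul, lie_self]

lemma map_ad_eq_g_neg_two (h : G.IsLeader Sg Y ζ) (hx₀ : x₀ ∈ G.rs (-ζ)) (hx₀0 : x₀ ≠ 0) :
    Y.map (LieAlgebra.ad ℂ L x₀) = G.g Sg (-2) := by
  have hS := h.subset_base
  refine le_antisymm ?_ ((G.g_le_iff (by norm_num)).mpr fun a ha ha2 => ?_)
  · rintro _ ⟨y, hy, rfl⟩
    exact G.lie_mem_g_add hS (i := -1) (j := -1) (by norm_num) (by norm_num) (by norm_num)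
      (G.rs_neg_le_g_neg_one hS h.mem_roots h.ht_eq_one hx₀) (h.le_g hy)
  obtain ⟨γ, hγ, δ, hδ, hγ1, hδ1, hsum⟩ :=
    G.base.exists_add_eq_of_ht_eq_two hS (G.base.neg_mem a ha)
      (by rw [G.base.ht_neg hS ha, ha2]; rfl)
  have hroot : -γ + -δ = a := by rw [← neg_add, hsum, neg_neg]
  obtain ⟨u, hu, hu0⟩ := G.exists_ne_zero_mem_rs (G.base.neg_mem γ hγ)
  obtain ⟨v, hv, hv0⟩ := G.exists_ne_zero_mem_rs (G.base.neg_mem δ hδ)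
  have huv : ⁅u, v⁆ ∈ G.rs a := hroot ▸ G.br_rs_mem _ (G.base.neg_mem γ hγ) _
    (G.base.neg_mem δ hδ) (hroot ▸ ha) u hu v hv
  have huv0 : ⁅u, v⁆ ≠ 0 := fun h0 => (G.br_nondeg _ (G.base.neg_mem γ hγ) _
    (G.base.neg_mem δ hδ) (hroot ▸ ha) u hu v hv h0).elim hu0 hv0
  have hu1 := G.rs_neg_le_g_neg_one hS hγ hγ1 hu
  have hv1 := G.rs_neg_le_g_neg_one hS hδ hδ1 hv
  obtain ⟨c₁, c₂, hc⟩ := h.exists_lie_eq hx₀ hx₀0 hu1 hv1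
  intro w hw
  obtain ⟨c, rfl⟩ := G.exists_smul_eq_of_mem_rs ha huv huv0 hw
  rw [hc]
  exact Submodule.smul_mem _ _ (Submodule.sub_mem _
    (Submodule.smul_mem _ _ (h.lie_mem_map_ad hx₀ hx₀0 hv1))
    (Submodule.smul_mem _ _ (h.lie_mem_map_ad hx₀ hx₀0 hu1)))

lemma eq_zero_of_lie_eq_zero [FiniteDimensional ℂ L] (h : G.IsLeader Sg Y ζ)
    (hx₀ : x₀ ∈ G.rs (-ζ)) (hx₀0 : x₀ ≠ 0) {y : L} (hy : y ∈ Y) (hxy : ⁅x₀, y⁆ = 0) : y = 0 := by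
  set F := (LieAlgebra.ad ℂ L x₀).domRestrict Y
  have hrange : Module.finrank ℂ (LinearMap.range F) = Module.finrank ℂ Y := by
    rw [LinearMap.range_domRestrict, h.map_ad_eq_g_neg_two hx₀ hx₀0, h.finrank_g_neg_two]
  have hker : LinearMap.ker F = ⊥ :=
    Submodule.finrank_eq_zero.mp (by have := F.finrank_range_add_finrank_ker; omega)
  have : (⟨y, hy⟩ : Y) ∈ LinearMap.ker F := by simpa [F] using hxy
  simpa [hker] using this

lemma lie_eq_zero_of_ht_eq_one (h : G.IsLeader Sg Y ζ) {γ δ : V} (hγ : γ ∈ G.base.Δ)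
    (hδ : δ ∈ G.base.Δ) (hγ1 : G.base.ht Sg γ = 1) (hδ1 : G.base.ht Sg δ = 1) (hγζ : γ ≠ ζ)
    (hδζ : δ ≠ ζ) {u v : L} (hu : u ∈ G.rs (-γ)) (hv : v ∈ G.rs (-δ)) : ⁅u, v⁆ = 0 := by
  have hS := h.subset_base
  have hζ := h.mem_roots
  have hζ1 : 0 < G.base.ht Sg ζ := h.ht_eq_one ▸ one_pos
  obtain ⟨x₀, hx₀, hx₀0⟩ := G.exists_ne_zero_mem_rs (G.base.neg_mem ζ hζ)
  obtain ⟨a, b, hab⟩ := h.exists_lie_eq hx₀ hx₀0 (G.rs_neg_le_g_neg_one hS hγ hγ1 hu)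
    (G.rs_neg_le_g_neg_one hS hδ hδ1 hv)
  by_cases hroot : -γ + -δ ∈ G.base.Δ
  · refine G.eq_zero_of_mem_rs_of_mem_rsCompl hroot
      (G.br_rs_mem _ (G.base.neg_mem γ hγ) _ (G.base.neg_mem δ hδ) hroot u hu v hv) ?_
    rw [hab]
    -- `⁅x₀, v⁆ ∈ 𝔤_{-ζ-δ}` and `⁅x₀, u⁆ ∈ 𝔤_{-ζ-γ}`, neither of which is `𝔤_{-γ-δ}`
    refine Submodule.sub_mem _ (Submodule.smul_mem _ _ ?_) (Submodule.smul_mem _ _ ?_)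
    · exact G.lie_mem_rsCompl (G.base.neg_mem ζ hζ) (G.base.neg_mem δ hδ)
        (G.base.neg_add_neg_ne_zero hS hδ hζ1 (by omega)) (by simpa using hγζ.symm) hx₀ hv
    · exact G.lie_mem_rsCompl (G.base.neg_mem ζ hζ) (G.base.neg_mem γ hγ)
        (G.base.neg_add_neg_ne_zero hS hγ hζ1 (by omega))
        (by rw [add_comm (-γ)]; simpa using hδζ.symm) hx₀ hu
  · exact G.br_rs_zero _ (G.base.neg_mem γ hγ) _ (G.base.neg_mem δ hδ) hroot
      (G.base.neg_add_neg_ne_zero hS hδ (by omega) (by omega)) u hu v hv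

lemma add_notMem_of_ht_eq_one (h : G.IsLeader Sg Y ζ) {γ δ : V} (hγ : γ ∈ G.base.Δ)
    (hδ : δ ∈ G.base.Δ) (hγ1 : G.base.ht Sg γ = 1) (hδ1 : G.base.ht Sg δ = 1) (hγζ : γ ≠ ζ)
    (hδζ : δ ≠ ζ) : γ + δ ∉ G.base.Δ := by
  intro hmem
  obtain ⟨u, hu, hu0⟩ := G.exists_ne_zero_mem_rs (G.base.neg_mem γ hγ)
  obtain ⟨v, hv, hv0⟩ := G.exists_ne_zero_mem_rs (G.base.neg_mem δ hδ)
  have hroot := G.base.neg_mem _ hmem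
  rw [neg_add] at hroot
  exact (G.br_nondeg _ (G.base.neg_mem γ hγ) _ (G.base.neg_mem δ hδ) hroot u hu v hv
    (h.lie_eq_zero_of_ht_eq_one hγ hδ hγ1 hδ1 hγζ hδζ hu hv)).elim hu0 hv0

lemma add_mem_of_ht_eq_one [FiniteDimensional ℂ L] (h : G.IsLeader Sg Y ζ) {μ : V}
    (hμ : μ ∈ G.base.Δ) (hμ1 : G.base.ht Sg μ = 1) (hμζ : μ ≠ ζ) : ζ + μ ∈ G.base.Δ := by
  have hS := h.subset_base
  have hζ := h.mem_roots
  obtain ⟨x₀, hx₀, hx₀0⟩ := G.exists_ne_zero_mem_rs (G.base.neg_mem ζ hζ)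
  obtain ⟨z, hz, hz0⟩ := G.exists_ne_zero_mem_rs (G.base.neg_mem μ hμ)
  obtain ⟨c, hc⟩ := h.exists_sub_smul_mem hx₀ hx₀0 (G.rs_neg_le_g_neg_one hS hμ hμ1 hz)
  have hxz : ⁅x₀, z⁆ ≠ 0 := by
    intro hxz
    have hzc : z = c • x₀ := sub_eq_zero.mp <| h.eq_zero_of_lie_eq_zero hx₀ hx₀0 hc (by
      rw [lie_sub, lie_smul, lie_self, smul_zero, sub_zero, hxz])
    refine hz0 (G.eq_zero_of_mem_rs_of_mem_rsCompl (G.base.neg_mem μ hμ) hz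
      (G.rs_le_rsCompl (b := -ζ) (neg_injective.ne hμζ.symm) ?_))
    rw [hzc]
    exact Submodule.smul_mem _ _ hx₀
  by_contra hnot
  have hroot : -ζ + -μ ∉ G.base.Δ := fun hm => hnot (by
    simpa [add_comm μ] using G.base.neg_mem _ hm)
  exact hxz (G.br_rs_zero _ (G.base.neg_mem ζ hζ) _ (G.base.neg_mem μ hμ) hroot
    (G.base.neg_add_neg_ne_zero hS hμ (h.ht_eq_one ▸ one_pos) (by omega)) x₀ hx₀ z hz)

lemma inner_ne_zero_of_mem [FiniteDimensional ℂ L] (h : G.IsLeader Sg Y ζ) {β : V} (hβ : β ∈ Sg)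
    (hβζ : β ≠ ζ) : ⟪β, ζ⟫ ≠ 0 := by
  have hβ0 := h.subset_base hβ
  have hsum := h.add_mem_of_ht_eq_one (G.base.base_sub hβ0)
    (G.base.ht_eq_one_of_mem h.subset_base hβ) hβζ
  rw [real_inner_comm]
  exact (G.base.add_mem_iff_inner_ne_zero (h.subset_base h.mem) hβ0 hβζ.symm).mp hsum

lemma mem_of_inner_ne_zero [FiniteDimensional ℂ L] (h : G.IsLeader Sg Y ζ)
    (hdim : 2 < Module.finrank ℂ (G.g Sg (-1))) {β : V} (hβ0 : β ∈ G.base.Δ0) (hβζ : β ≠ ζ)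
    (hadj : ⟪β, ζ⟫ ≠ 0) : β ∈ Sg := by
  have hS := h.subset_base
  have hζ := h.mem_roots
  have hβ := G.base.base_sub hβ0
  by_contra hβS
  have hβ1 : G.base.ht Sg β = 0 := G.base.ht_eq_zero_of_notMem hS hβ0 hβS
  have hβζ' : ⟪β, ζ⟫ < 0 :=
    (G.base.inner_nonpos_of_simple hβ0 (hS h.mem) hβζ).lt_of_ne hadj
  have hγ : ζ + β ∈ G.base.Δ :=
    (G.base.add_mem_iff_inner_ne_zero (hS h.mem) hβ0 hβζ.symm).mpr (by rwa [real_inner_comm])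
  have hγ1 : G.base.ht Sg (ζ + β) = 1 := by
    rw [G.base.ht_add hS hζ hβ hγ, h.ht_eq_one, hβ1, add_zero]
  have hγζ : ζ + β ≠ ζ := by simpa using G.base.ne_zero β hβ
  obtain ⟨δ, hδ, hδ1, hδζ, hδγ⟩ := G.exists_ht_eq_one_ne_ne hS hdim ζ (ζ + β)
  have hζδ : ζ + δ ∈ G.base.Δ := h.add_mem_of_ht_eq_one hδ hδ1 hδζ
  rcases le_or_gt ⟪β, δ⟫ 0 with hβδ | hβδ
  · refine h.add_notMem_of_ht_eq_one hγ hδ hγ1 hδ1 hγζ hδζ ?_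
    rw [show ζ + β + δ = β + (ζ + δ) by abel]
    refine G.base.add_mem_of_inner_neg hβ hζδ (by rw [inner_add_right]; linarith) ?_
    exact ne_of_apply_ne (G.base.ht Sg) (by
      rw [G.base.ht_neg hS hζδ, G.base.ht_add hS hζ hδ hζδ, h.ht_eq_one]; omega)
  · have hδβ : δ - β ∈ G.base.Δ := G.base.sub_mem_of_inner_pos hδ hβ (by rwa [real_inner_comm])
      (ne_of_apply_ne (G.base.ht Sg) (by omega))
    refine h.add_notMem_of_ht_eq_one hδβ hγ (by rw [G.base.ht_sub hS hδ hβ hδβ]; omega) hγ1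
      (fun h' => hδγ (by rw [← h', sub_add_cancel])) hγζ ?_
    rwa [sub_add_add_cancel, add_comm]

end IsLeader

end GradedLieData

theorem statement4_general {V : Type*} [NormedAddCommGroup V] [InnerProductSpace ℝ V]
    {L : Type*} [LieRing L] [LieAlgebra ℂ L] [FiniteDimensional ℂ L]
    (G : GradedLieData V L) (Sg : Finset V) (hSg : Sg ⊆ G.base.Δ0)
    (hdim : 2 < Module.finrank ℂ ↥(G.g Sg (-1)))
    (Y : Submodule ℂ L) (hY1 : Y ≤ G.g Sg (-1))
    (hYab : ∀ a ∈ Y, ∀ b ∈ Y, ⁅a, b⁆ = (0 : L))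
    (hYdim : Module.finrank ℂ ↥(G.g Sg (-2)) = Module.finrank ℂ ↥Y)
    (ζ : V) (hζ : ζ ∈ Sg)
    (hleader : G.rs (-ζ) ⊔ Y = G.g Sg (-1) ∧ G.rs (-ζ) ⊓ Y = ⊥) :
    (↑Sg : Set V) = {ζ} ∪ {β : V | β ∈ G.base.Δ0 ∧ β ≠ ζ ∧ ⟪β, ζ⟫ ≠ 0} := by
  have h : G.IsLeader Sg Y ζ := ⟨hSg, hζ, hY1, hYab, hYdim, hleader.1⟩
  ext β
  simp only [Finset.mem_coe, Set.mem_union, Set.mem_singleton_iff, Set.mem_ofPred_eq]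
  constructor
  · intro hβ
    by_cases hβζ : β = ζ
    · exact Or.inl hβζ
    · exact Or.inr ⟨hSg hβ, hβζ, h.inner_ne_zero_of_mem hβ hβζ⟩
  · rintro (rfl | ⟨hβ0, hβζ, hadj⟩)
    · exact hζ
    · exact h.mem_of_inner_ne_zero hdim hβ0 hβζ hadj

/-- For a grading of Monge type of a complex semisimple Lie algebra
with `dim 𝔤₋₁ > 2` and leader `ζ ∈ Σ` (the unique simple root with
`𝔤₋₁ = 𝔤_{-ζ} ⊕ 𝔶`), the set `Σ` consists precisely of `ζ` together with all simple
roots adjacent to `ζ` in the Dynkin diagram. -/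
theorem statement4 {V : Type*} [NormedAddCommGroup V] [InnerProductSpace ℝ V]
    {L : Type*} [LieRing L] [LieAlgebra ℂ L] [FiniteDimensional ℂ L]
    (G : GradedLieData V L) (Sg : Finset V) (hSg : Sg ⊆ G.base.Δ0) (hne : Sg.Nonempty)
    (hdim : 2 < Module.finrank ℂ ↥(G.g Sg (-1)))
    (Y : Submodule ℂ L) (hY1 : Y ≤ G.g Sg (-1)) (hY0 : Y ≠ ⊥)
    (hYab : ∀ a ∈ Y, ∀ b ∈ Y, ⁅a, b⁆ = (0 : L))
    (hYcodim : Module.finrank ℂ ↥Y + 1 = Module.finrank ℂ ↥(G.g Sg (-1)))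
    (hYdim : Module.finrank ℂ ↥(G.g Sg (-2)) = Module.finrank ℂ ↥Y)
    (ζ : V) (hζ : ζ ∈ Sg)
    (hleader : G.rs (-ζ) ⊔ Y = G.g Sg (-1) ∧ G.rs (-ζ) ⊓ Y = ⊥) :
    (↑Sg : Set V) = {ζ} ∪ {β : V | β ∈ G.base.Δ0 ∧ β ≠ ζ ∧ ⟪β, ζ⟫ ≠ 0} :=
  statement4_general G Sg hSg hdim Y hY1 hYab hYdim ζ hζ hleader
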